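/- arXiv:2603.06692 — 3 statements merged into one kernel-verified Lean document; each statement's English description precedes it below -/
import Mathlib

section
/- Let L be a Latin square of order n and fix rows r_1 ≠ r_2. Define π ∈ S_n on columns by: π(c) is the unique column c' with L(r_2, c') = L(r_1, c). If C is a union of cycles of π and T(L) is the square obtained by swapping the entries of rows r_1 and r_2 in exactly the columns of C, then T(L) is again a Latin square, and T(T(L)) = L. -/
/-- A Latin square of order `n`: an `n × n` array of symbols from `Fin n` whose
rows and columns are each permutations of `Fin n`. -/
structure LatinSquare (n : ℕ) where
  toFun : Fin n → Fin n → Fin n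
  row_bij : ∀ r, Function.Bijective (toFun r)
  col_bij : ∀ c, Function.Bijective (fun r => toFun r c)

/-- The row permutation `ρ_r` of a Latin square, `ρ_r c = L r c`. -/
noncomputable def LatinSquare.rowPerm {n : ℕ} (L : LatinSquare n) (r : Fin n) :
    Equiv.Perm (Fin n) :=
  Equiv.ofBijective (L.toFun r) (L.row_bij r)

/-- The column permutation `κ_c` of a Latin square, `κ_c r = L r c`. -/
noncomputable def LatinSquare.colPerm {n : ℕ} (L : LatinSquare n) (c : Fin n) :
    Equiv.Perm (Fin n) :=
  Equiv.ofBijective (fun r => L.toFun r c) (L.col_bij c)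

/-- The Alon–Tarsi sign of a Latin square: the product of the signs of all row
permutations and all column permutations. -/
noncomputable def LatinSquare.sign {n : ℕ} (L : LatinSquare n) : ℤˣ :=
  (∏ r : Fin n, Equiv.Perm.sign (L.rowPerm r)) *
  (∏ c : Fin n, Equiv.Perm.sign (L.colPerm c))

/-- The row-matching permutation `π` of two rows `r₁, r₂` of a Latin square:
`π c` is the unique column `c'` with `L r₂ c' = L r₁ c`. -/
noncomputable def LatinSquare.rowMatch {n : ℕ} (L : LatinSquare n) (r₁ r₂ : Fin n) :
    Equiv.Perm (Fin n) :=
  (L.rowPerm r₁).trans (L.rowPerm r₂).symm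

/-- The cycle trade on a pair of rows: swap the entries of rows `r₁` and `r₂`
exactly in the columns belonging to `C`. -/
def trade {n : ℕ} (r₁ r₂ : Fin n) (C : Finset (Fin n)) [DecidableEq (Fin n)]
    (f : Fin n → Fin n → Fin n) : Fin n → Fin n → Fin n := fun r c =>
  if c ∈ C then
    if r = r₁ then f r₂ c else if r = r₂ then f r₁ c else f r c
  else f r c

/-- **Cycle trades produce Latin squares and are involutions.** If `C` is a
union of cycles of the row-matching permutation `π` of rows `r₁ ≠ r₂` of a Latin
square `L`, then swapping rows `r₁` and `r₂` on exactly the columns of `C`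
yields again a Latin square, and performing the trade twice returns `L`. -/
theorem trade_latin_involution {n : ℕ} (L : LatinSquare n) (r₁ r₂ : Fin n)
    (hne : r₁ ≠ r₂) (C : Finset (Fin n))
    (hC : ∀ c ∈ C, L.rowMatch r₁ r₂ c ∈ C) :
    (∀ r, Function.Bijective (trade r₁ r₂ C L.toFun r)) ∧
    (∀ c, Function.Bijective (fun r => trade r₁ r₂ C L.toFun r c)) ∧
    trade r₁ r₂ C (trade r₁ r₂ C L.toFun) = L.toFun := by
  have key : ∀ c c' : Fin n, L.rowMatch r₁ r₂ c = c' ↔ L.toFun r₂ c' = L.toFun r₁ c := by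
    intro c c'
    simp only [LatinSquare.rowMatch, Equiv.trans_apply, Equiv.symm_apply_eq]
    exact eq_comm
  -- C is closed under π⁻¹ as well
  have himg : C.image (L.rowMatch r₁ r₂) = C := by
    apply Finset.eq_of_subset_of_card_le
    · intro x hx
      rcases Finset.mem_image.mp hx with ⟨a, ha, rfl⟩
      exact hC a ha
    · rw [Finset.card_image_of_injective _ (L.rowMatch r₁ r₂).injective]
  have hC' : ∀ c, L.rowMatch r₁ r₂ c ∈ C → c ∈ C := by
    intro c hc
    rw [← himg] at hc
    rcases Finset.mem_image.mp hc with ⟨a, ha, h⟩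
    rwa [← (L.rowMatch r₁ r₂).injective h]
  refine ⟨?_, ?_, ?_⟩
  · intro r
    rw [← Finite.injective_iff_bijective]
    intro c c' h
    simp only [trade] at h
    by_cases hc : c ∈ C <;> by_cases hc' : c' ∈ C <;>
        simp only [hc, hc', if_true, if_false] at h
    · split_ifs at h with h1 h2
      · exact (L.row_bij r₂).1 h
      · exact (L.row_bij r₁).1 h
      · exact (L.row_bij r).1 h
    · -- c ∈ C, c' ∉ C
      split_ifs at h with h1 h2
      · subst h1
        have hpi := (key c' c).mpr h
        exact absurd (hC' c' (by rw [hpi]; exact hc)) hc'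
      · subst h2
        have hpi := (key c c').mpr h.symm
        exact absurd (hpi ▸ hC c hc) hc'
      · exact (L.row_bij r).1 h
    · -- c ∉ C, c' ∈ C
      split_ifs at h with h1 h2
      · subst h1
        have hpi := (key c c').mpr h.symm
        exact absurd (hC' c (by rw [hpi]; exact hc')) hc
      · subst h2
        have hpi := (key c' c).mpr h
        exact absurd (hpi ▸ hC c' hc') hc
      · exact (L.row_bij r).1 h
    · exact (L.row_bij r).1 h
  · intro c
    by_cases hc : c ∈ C
    · have : (fun r => trade r₁ r₂ C L.toFun r c) =
          (fun r => L.toFun r c) ∘ (Equiv.swap r₁ r₂) := by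
        funext r
        simp only [trade, hc, if_true, Function.comp]
        by_cases h1 : r = r₁
        · subst h1; rw [Equiv.swap_apply_left]; simp
        · by_cases h2 : r = r₂
          · subst h2; rw [Equiv.swap_apply_right]; simp [Ne.symm hne]
          · rw [Equiv.swap_apply_of_ne_of_ne h1 h2]; simp [h1, h2]
      rw [this]
      exact (L.col_bij c).comp (Equiv.swap r₁ r₂).bijective
    · have : (fun r => trade r₁ r₂ C L.toFun r c) = fun r => L.toFun r c := by
        funext r; simp [trade, hc]
      rw [this]; exact L.col_bij c
  · funext r c
    by_cases hc : c ∈ C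
    · by_cases h1 : r = r₁
      · subst h1; simp [trade, hc, Ne.symm hne]
      · by_cases h2 : r = r₂
        · subst h2; simp [trade, hc, hne, Ne.symm hne]
        · simp [trade, hc, h1, h2]
    · simp [trade, hc]
end

section
/- Let L be a Latin square of order n, fix rows r_1 ≠ r_2, let π be the associated row-matching permutation on columns, and let C be a single cycle of π of length ℓ. If T(L) is obtained by swapping the entries of rows r_1 and r_2 on the columns of C, then sgn(T(L)) = (−1)^ℓ · sgn(L). In particular, a trade along an odd-length cycle flips the Alon–Tarsi sign, while a trade along an even-length cycle preserves it. -/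
/-! Only the two traded rows and the columns of `C` change. Each column of `C` is composed with
the transposition of `r₁, r₂`, contributing `(-1)^ℓ`. Because `C` is invariant under
`π = ρ_{r₂}⁻¹ ρ_{r₁}`, the new rows are `ρ_{r₁} σ⁻¹` and `ρ_{r₂} σ`, where `σ` is `π` on `C` and
the identity elsewhere, so the signs of the two rows change by the same factor and their product
is unchanged. -/

open Equiv Equiv.Perm Finset

namespace Equiv.Perm

variable {α : Type*}

theorem apply_mem_iff_of_mem_iff_exists_pow [Finite α] {π : Perm α} {s : Finset α} {x : α}
    (hs : ∀ y, y ∈ s ↔ ∃ k : ℕ, (π ^ k) x = y) (y : α) : π y ∈ s ↔ y ∈ s := by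
  have hcycle : ∀ y, y ∈ s ↔ π.SameCycle x y := fun y => by
    rw [hs]
    exact ⟨fun ⟨k, hk⟩ => ⟨k, by simpa using hk⟩, SameCycle.exists_nat_pow_eq⟩
  rw [hcycle, hcycle, sameCycle_apply_right]

variable [Fintype α] [DecidableEq α]

theorem sign_mul_sign_of_piecewise_swap {ρ₁ ρ₂ ρ₁' ρ₂' : Perm α} {s : Finset α}
    (hs : ∀ x, (ρ₁.trans ρ₂.symm) x ∈ s ↔ x ∈ s)
    (h₁ : ∀ x, ρ₁' x = if x ∈ s then ρ₂ x else ρ₁ x)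
    (h₂ : ∀ x, ρ₂' x = if x ∈ s then ρ₁ x else ρ₂ x) :
    sign ρ₁' * sign ρ₂' = sign ρ₁ * sign ρ₂ := by
  set σ := ofSubtype (Perm.subtypePerm (ρ₁.trans ρ₂.symm) hs)
  have hσ : ∀ x, σ x = if x ∈ s then ρ₂.symm (ρ₁ x) else x := fun x => by
    split_ifs with hx
    · exact ofSubtype_subtypePerm_of_mem hs hx
    · exact ofSubtype_subtypePerm_of_not_mem hs hx
  have hρ₂' : ρ₂' = ρ₂ * σ := by
    ext x
    by_cases hx : x ∈ s <;> simp [h₂, hσ, hx]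
  have hρ₁' : ρ₁' = ρ₁ * σ⁻¹ := by
    refine eq_mul_inv_of_mul_eq (Equiv.ext fun x => ?_)
    by_cases hx : x ∈ s
    · have hσx : σ x ∈ s := by rw [hσ, if_pos hx]; exact (hs x).2 hx
      rw [mul_apply, h₁, if_pos hσx, hσ, if_pos hx, apply_symm_apply]
    · simp [h₁, hσ, hx]
  rw [hρ₁', hρ₂', map_mul, map_mul, sign_inv, mul_mul_mul_comm, Int.units_mul_self, mul_one]

end Equiv.Perm

theorem Finset.prod_univ_eq_of_eq_off_pair {ι M : Type*} [Fintype ι] [DecidableEq ι]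
    [CommMonoid M] {f g : ι → M} {a b : ι} (hab : a ≠ b)
    (hpair : f a * f b = g a * g b) (hoff : ∀ x, x ≠ a → x ≠ b → f x = g x) :
    ∏ x, f x = ∏ x, g x := by
  rw [← prod_mul_prod_compl {a, b} f, ← prod_mul_prod_compl {a, b} g, prod_pair hab,
    prod_pair hab, hpair]
  congr 1
  refine prod_congr rfl fun x hx => ?_
  simp only [mem_compl, mem_insert, mem_singleton, not_or] at hx
  exact hoff x hx.1 hx.2

theorem trade_apply {n : ℕ} (r₁ r₂ : Fin n) (C : Finset (Fin n)) (f : Fin n → Fin n → Fin n)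
    (r c : Fin n) : trade r₁ r₂ C f r c = if c ∈ C then f (swap r₁ r₂ r) c else f r c := by
  unfold trade
  split_ifs <;> subst_vars <;> simp_all [swap_apply_of_ne_of_ne]

namespace LatinSquare

variable {n : ℕ} {L L' : LatinSquare n} {r₁ r₂ : Fin n} {C : Finset (Fin n)}

@[simp]
theorem rowPerm_apply (L : LatinSquare n) (r c : Fin n) : L.rowPerm r c = L.toFun r c := rfl

@[simp]
theorem colPerm_apply (L : LatinSquare n) (r c : Fin n) : L.colPerm c r = L.toFun r c := rfl

theorem colPerm_of_trade (hL' : L'.toFun = trade r₁ r₂ C L.toFun) (c : Fin n) :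
    L'.colPerm c = if c ∈ C then L.colPerm c * swap r₁ r₂ else L.colPerm c := by
  ext r
  split_ifs with hc <;> simp [hL', trade_apply, hc]

theorem prod_sign_colPerm_of_trade (hne : r₁ ≠ r₂) (hL' : L'.toFun = trade r₁ r₂ C L.toFun) :
    ∏ c, Perm.sign (L'.colPerm c) = (-1) ^ #C * ∏ c, Perm.sign (L.colPerm c) := by
  have hcol : ∀ c,
      Perm.sign (L'.colPerm c) = (if c ∈ C then -1 else 1) * Perm.sign (L.colPerm c) := fun c => by
    rw [colPerm_of_trade hL']
    split_ifs <;> simp [sign_swap hne, mul_comm]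
  simp only [hcol, prod_mul_distrib, prod_ite_mem, univ_inter, prod_const]

theorem prod_sign_rowPerm_of_trade (hne : r₁ ≠ r₂)
    (hC : ∀ c, L.rowMatch r₁ r₂ c ∈ C ↔ c ∈ C) (hL' : L'.toFun = trade r₁ r₂ C L.toFun) :
    ∏ r, Perm.sign (L'.rowPerm r) = ∏ r, Perm.sign (L.rowPerm r) := by
  refine prod_univ_eq_of_eq_off_pair hne (sign_mul_sign_of_piecewise_swap hC ?_ ?_) ?_
  · intro c; simp [hL', trade_apply]
  · intro c; simp [hL', trade_apply]
  · intro r h₁ h₂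
    congr 1
    ext c
    simp [hL', trade_apply, swap_apply_of_ne_of_ne h₁ h₂]

end LatinSquare

/-- **Sign effect of a single-cycle trade.** If `C` is a single cycle (orbit) of
the row-matching permutation of rows `r₁ ≠ r₂` of a Latin square `L`, of length
`ℓ`, then swapping the two rows on exactly the columns of `C` multiplies the
Alon–Tarsi sign by `(-1)^ℓ`: an odd cycle flips the sign, an even cycle
preserves it. -/
theorem sign_single_cycle_trade {n : ℕ} (L L' : LatinSquare n) (r₁ r₂ : Fin n)
    (hne : r₁ ≠ r₂) (C : Finset (Fin n)) (ℓ : ℕ) (hℓ : C.card = ℓ)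
    (horbit : ∃ c₀ ∈ C, ∀ c : Fin n, c ∈ C ↔ ∃ k : ℕ, (L.rowMatch r₁ r₂ ^ k) c₀ = c)
    (hL' : L'.toFun = trade r₁ r₂ C L.toFun) :
    L'.sign = (-1) ^ ℓ * L.sign := by
  obtain ⟨c₀, -, hC⟩ := horbit
  have hinv := apply_mem_iff_of_mem_iff_exists_pow hC
  rw [LatinSquare.sign, LatinSquare.sign, LatinSquare.prod_sign_rowPerm_of_trade hne hinv hL',
    LatinSquare.prod_sign_colPerm_of_trade hne hL', hℓ, mul_left_comm]
end

section
/- Let L be a Latin square of even order n and let L' be obtained from L by applying an isotopy: L'(r,c) = γ(L(α(r), β(c))) for permutations α, β, γ ∈ S_n. Then sgn(L') = sgn(α)^n · sgn(β)^n · sgn(γ)^{2n} · sgn(L) = sgn(L); that is, for even n the Alon–Tarsi sign is invariant under isotopy. -/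
/-- **Isotopy invariance of the Alon–Tarsi sign for even order.** If `L'` is
obtained from a Latin square `L` of even order `n` by an isotopy
`L' r c = γ (L (α r) (β c))` with `α, β, γ ∈ S_n`, then
`sgn(L') = sgn(α)^n · sgn(β)^n · sgn(γ)^{2n} · sgn(L) = sgn(L)`. -/
theorem sign_isotopy_invariant {n : ℕ} (hn : Even n) (L L' : LatinSquare n)
    (α β γ : Equiv.Perm (Fin n))
    (hL' : ∀ r c, L'.toFun r c = γ (L.toFun (α r) (β c))) :
    L'.sign = Equiv.Perm.sign α ^ n * Equiv.Perm.sign β ^ n *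
        Equiv.Perm.sign γ ^ (2 * n) * L.sign ∧
    L'.sign = L.sign := by

  have hrow : ∀ r, L'.rowPerm r = γ * L.rowPerm (α r) * β := by
    intro r
    ext c
    simp [LatinSquare.rowPerm, Equiv.ofBijective, hL']
  have hcol : ∀ c, L'.colPerm c = γ * L.colPerm (β c) * α := by
    intro c
    ext r
    simp [LatinSquare.colPerm, Equiv.ofBijective, hL']
  have heven : ∀ x : ℤˣ, x ^ n = 1 := by
    intro x
    obtain ⟨k, hk⟩ := hn
    rw [hk, pow_add, ← sq, ← pow_mul, mul_comm, pow_mul, Int.units_sq, one_pow]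
  have h1 : L'.sign = Equiv.Perm.sign α ^ n * Equiv.Perm.sign β ^ n *
      Equiv.Perm.sign γ ^ (2 * n) * L.sign := by
    unfold LatinSquare.sign
    simp only [hrow, hcol, map_mul]
    rw [Finset.prod_mul_distrib, Finset.prod_mul_distrib,
      Finset.prod_mul_distrib, Finset.prod_mul_distrib,
      Finset.prod_const,
      Equiv.prod_comp α (fun r => Equiv.Perm.sign (L.rowPerm r)),
      Equiv.prod_comp β (fun c => Equiv.Perm.sign (L.colPerm c))]
    simp only [Finset.card_univ, Fintype.card_fin]
    rw [two_mul, pow_add]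
    simp only [Finset.prod_const, Finset.card_univ, Fintype.card_fin]
    simp only [mul_comm, mul_left_comm, mul_assoc]
  refine ⟨h1, ?_⟩
  rw [h1, heven, heven, two_mul, pow_add, heven]; simp
end
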